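/- There exist a stationary set S ⊆ {α < ω₃ : cf α = ω} and a stationary set A ⊆ {α < ω₃ : cf α = ω₁} such that for every γ ∈ A, S ∩ γ is not stationary in γ. (Assume there exist ω₂-many pairwise disjoint stationary subsets of {α < ω₃ : cf α = ω}.) -/

import Mathlib

/-- `C` is a closed unbounded (club) subset of the ordinal `γ`:
it is a set of ordinals below `γ`, unbounded in `γ`, and closed
(contains each of its limit points below `γ`). -/
def IsClubIn (C : Set Ordinal) (γ : Ordinal) : Prop :=
  C ⊆ Set.Iio γ ∧ (∀ β < γ, ∃ α ∈ C, β ≤ α) ∧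
    ∀ α < γ, 0 < α → (∀ β < α, ∃ c ∈ C, β < c ∧ c < α) → α ∈ C

/-- `S` is stationary in the ordinal `γ`: it meets every club subset of `γ`. -/
def IsStatIn (S : Set Ordinal) (γ : Ordinal) : Prop :=
  ∀ C, IsClubIn C γ → (S ∩ C).Nonempty

/-- The order type of a set of ordinals. -/
noncomputable def otp (s : Set Ordinal) : Ordinal :=
  Ordinal.type ((· < ·) : s → s → Prop)

/-!
Every `γ < ω₃` of cofinality `ω₁` carries a club of size `ℵ₁` (the limit points of a cofinal
`ω₁`-sequence), so fewer than `ℵ₂` of the pairwise disjoint sets `T i` can be stationary in `γ`.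
Hence `S³₁ = {γ < ω₃ : cf γ = ω₁}` is covered by the `ℵ₂` sets
`Aᵢ = {γ ∈ S³₁ : T i ∩ γ is not stationary in γ}`. Since `S³₁` is stationary in `ω₃` and
`ℵ₂ < cf ω₃`, one of the `Aᵢ` is stationary, and `S = T i`, `A = Aᵢ` work.
-/

open Cardinal Function Ordinal Order Set

universe u v

section Clubs

variable {C S : Set Ordinal.{u}} {γ : Ordinal.{u}}

theorem IsStatIn.mono {T : Set Ordinal.{u}} (hS : IsStatIn S γ) (hST : S ⊆ T) : IsStatIn T γ :=
  fun C hC => (hS C hC).mono (inter_subset_inter_left C hST)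

theorem IsClubIn.sSup_mem (hC : IsClubIn C γ) {t : Set Ordinal.{u}} (htC : t ⊆ C)
    (ht : t.Nonempty) (htγ : sSup t < γ) : sSup t ∈ C := by
  have hbdd : BddAbove t := ⟨γ, fun x hx => (hC.1 (htC hx)).le⟩
  by_cases hmem : sSup t ∈ t
  · exact htC hmem
  have hlt : ∀ β < sSup t, ∃ c ∈ t, β < c ∧ c < sSup t := fun β hβ => by
    obtain ⟨c, hct, hβc⟩ := exists_lt_of_lt_csSup ht hβ
    exact ⟨c, hct, hβc, (le_csSup hbdd hct).lt_of_ne fun h => hmem (h ▸ hct)⟩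
  obtain ⟨x, hx⟩ := ht
  have hpos : 0 < sSup t := zero_le.trans_lt <| (le_csSup hbdd hx).lt_of_ne fun h => hmem (h ▸ hx)
  refine hC.2.2 _ htγ hpos fun β hβ => ?_
  obtain ⟨c, hct, hc⟩ := hlt β hβ
  exact ⟨c, htC hct, hc⟩

theorem IsClubIn.isClub_preimage_val (hC : IsClubIn C γ) :
    IsClub (Subtype.val ⁻¹' C : Set (Iio γ)) := by
  refine ⟨dirSupClosed_iff_of_linearOrder.2 fun d hdC hd a ha => ?_, fun a => ?_⟩
  · by_cases had : a ∈ d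
    · exact hdC had
    refine hC.2.2 a.1 a.2 ?_ fun β hβ => ?_
    · obtain ⟨x, hx⟩ := hd
      exact zero_le.trans_lt ((ha.1 hx).lt_of_ne fun h => had (h ▸ hx))
    · obtain ⟨c, hcd, hβc, hca⟩ := ha.exists_between (b := ⟨β, hβ.trans a.2⟩) hβ
      exact ⟨c.1, hdC hcd, hβc, hca.lt_of_ne fun h => had (h ▸ hcd)⟩
  · obtain ⟨c, hcC, hac⟩ := hC.2.1 a.1 a.2
    exact ⟨⟨c, hC.1 hcC⟩, hcC, hac⟩

theorem IsClub.isClubIn_image_val {D : Set (Iio γ)} (hD : IsClub D) :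
    IsClubIn (Subtype.val '' D) γ := by
  refine ⟨by rintro _ ⟨x, -, rfl⟩; exact x.2, fun β hβ => ?_, fun α hαγ hα H => ?_⟩
  · obtain ⟨x, hxD, hβx⟩ := hD.isCofinal (⟨β, hβ⟩ : Iio γ)
    exact ⟨x.1, mem_image_of_mem _ hxD, hβx⟩
  · have hlub : IsLUB {x ∈ D | x < ⟨α, hαγ⟩} (⟨α, hαγ⟩ : Iio γ) := by
      refine ⟨fun x hx => hx.2.le, fun b hb => not_lt.1 fun hbα => ?_⟩
      obtain ⟨_, ⟨c, hcD, rfl⟩, hbc, hcα⟩ := H b.1 hbα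
      exact (hb ⟨hcD, hcα⟩).not_gt hbc
    obtain ⟨_, ⟨c, hcD, rfl⟩, -, hcα⟩ := H 0 hα
    exact ⟨_, hD.isLUB_mem (sep_subset _ _) ⟨c, hcD, hcα⟩ hlub, rfl⟩

theorem isStatIn_iff_isStationary :
    IsStatIn S γ ↔ IsStationary (Subtype.val ⁻¹' S : Set (Iio γ)) := by
  refine ⟨fun h D hD => ?_, fun h C hC => ?_⟩
  · obtain ⟨_, hxS, x, hxD, rfl⟩ := h _ hD.isClubIn_image_val
    exact ⟨x, hxS, hxD⟩
  · obtain ⟨x, hxS, hxC⟩ := h hC.isClub_preimage_val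
    exact ⟨x.1, hxS, hxC⟩

theorem isStatIn_iUnion_iff {ι : Type v} {A : ι → Set Ordinal.{u}} (hγ : γ.cof ≠ ℵ₀)
    (hι : lift.{u} #ι < lift.{v} γ.cof) :
    IsStatIn (⋃ i, A i) γ ↔ ∃ i, IsStatIn (A i) γ := by
  simp only [isStatIn_iff_isStationary, preimage_iUnion]
  refine isStationary_iUnion_iff ?_ ?_
  · simpa [← lift_cof] using hγ
  · simpa [← lift_cof] using Cardinal.lift_strictMono.{_, u + 1} hι

end Clubs

section CofPoints

variable {C : Set Ordinal.{u}} {γ a : Ordinal.{u}}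

theorem IsClubIn.exists_mem_cof_eq (hC : IsClubIn C γ) (ha : IsSuccLimit a)
    (haγ : a.card < γ.cof) : ∃ x ∈ C, x.cof = a.cof := by
  have hγ : IsSuccLimit γ := one_lt_cof_iff.1 <|
    (Cardinal.one_le_iff_ne_zero.2 (card_eq_zero.not.2 ha.ne_bot)).trans_lt haγ
  set s := C ∪ Ici γ
  have hs : ∀ t ⊆ s, t.Nonempty → BddAbove t → sSup t ∈ s := by
    intro t hts ht hbdd
    rcases lt_or_ge (sSup t) γ with htγ | htγ
    · refine Or.inl (hC.sSup_mem (fun x hx => ?_) ht htγ)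
      exact (hts hx).resolve_right fun hγx => ((le_csSup hbdd hx).trans_lt htγ).not_ge hγx
    · exact Or.inr htγ
  have hs' : ¬BddAbove s := not_bddAbove_iff.2 fun x =>
    ⟨max x γ + 1, Or.inr ((le_max_right x γ).trans (lt_add_one _).le),
      (le_max_left x γ).trans_lt (lt_add_one _)⟩
  -- `enumOrd s a` has cofinality `cof a`; were it `≥ γ`, the fewer than `cof γ` values of
  -- `enumOrd s` below it would cover `C`.
  have he := isNormal_enumOrd hs hs'
  refine ⟨enumOrd s a, (enumOrd_mem hs' a).resolve_right fun hγa => ?_, cof_map_of_isNormal he ha⟩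
  have hCsub : C ⊆ enumOrd s '' Iio a := fun c hc => by
    obtain ⟨η, rfl⟩ := enumOrd_surjective hs' (Or.inl hc)
    exact ⟨η, he.strictMono.lt_iff_lt.1 ((hC.1 hc).trans_le hγa), rfl⟩
  have hCcard : #C < (lift.{u + 1} γ).cof := by
    calc #C ≤ #(Iio a) := (mk_le_mk_of_subset hCsub).trans mk_image_le
      _ = lift.{u + 1} a.card := Cardinal.mk_Iio_ordinal a
      _ < (lift.{u + 1} γ).cof := by rwa [← lift_cof, Cardinal.lift_lt]
  have hsup := sSup_lt_of_lt_cof hCcard hC.1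
  obtain ⟨c, hcC, hc⟩ := hC.2.1 _ (hγ.succ_lt hsup)
  exact (lt_succ_of_le (le_csSup ⟨γ, fun x hx => (hC.1 hx).le⟩ hcC)).not_ge hc

theorem isStatIn_setOf_cof_eq (ha : IsSuccLimit a) (haγ : a.card < γ.cof) :
    IsStatIn {x | x < γ ∧ x.cof = a.cof} γ := fun _ hD =>
  let ⟨x, hxD, hx⟩ := hD.exists_mem_cof_eq ha haγ
  ⟨x, ⟨hD.1 hxD, hx⟩, hxD⟩

end CofPoints

section SmallClub

def limitPointsBelow (R : Set Ordinal.{u}) (γ : Ordinal.{u}) : Set Ordinal.{u} :=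
  {x | x < γ ∧ 0 < x ∧ ∀ δ < x, ∃ y ∈ R, δ < y ∧ y < x}

variable {R : Set Ordinal.{u}} {γ : Ordinal.{u}}

theorem isClubIn_limitPointsBelow (hγ : ℵ₀ < γ.cof) (hR : ∀ x < γ, ∃ y ∈ R, x < y ∧ y < γ) :
    IsClubIn (limitPointsBelow R γ) γ := by
  refine ⟨fun x hx => hx.1, fun β hβ => ?_, fun α hαγ hα H => ⟨hαγ, hα, fun δ hδ => ?_⟩⟩
  · choose! F hFR hlt hFγ using hR
    have hiter : ∀ n, F^[n] β < γ := fun n => by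
      induction n with
      | zero => exact hβ
      | succ n ih => rw [iterate_succ_apply']; exact hFγ _ ih
    have hstep : ∀ n, F^[n + 1] β < nfp F β := fun n =>
      (iterate_succ_apply' F (n + 1) β ▸ hlt _ (hiter (n + 1))).trans_le
        (iterate_le_nfp F β (n + 2))
    refine ⟨nfp F β, ⟨nfp_lt_ord hγ hFγ hβ, zero_le.trans_lt (hstep 0), fun δ hδ => ?_⟩,
      (hlt β hβ).le.trans (iterate_le_nfp F β 1)⟩
    obtain ⟨n, hn⟩ := lt_nfp_iff.1 hδ
    refine ⟨F^[n + 1] β, ?_, ?_, hstep n⟩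
    · rw [iterate_succ_apply']; exact hFR _ (hiter n)
    · rw [iterate_succ_apply']; exact hn.trans (hlt _ (hiter n))
  · obtain ⟨c, hc, hδc, hcα⟩ := H δ hδ
    obtain ⟨y, hyR, hδy, hyc⟩ := hc.2.2 δ hδc
    exact ⟨y, hyR, hδy, hyc.trans hcα⟩

theorem mk_limitPointsBelow_le (hR : ∀ x < γ, ∃ y ∈ R, x < y ∧ y < γ) :
    #(limitPointsBelow R γ) ≤ #R := by
  have hne : ∀ x ∈ limitPointsBelow R γ, (R ∩ Ici x).Nonempty := fun x hx =>
    let ⟨y, hyR, hxy, _⟩ := hR x hx.1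
    ⟨y, hyR, hxy.le⟩
  let f : limitPointsBelow R γ → R := fun x => ⟨sInf (R ∩ Ici x.1), (csInf_mem (hne x x.2)).1⟩
  -- a point of `R` lies between any two limit points
  have hf : StrictMono fun x => (f x).1 := fun x x' hxx' => by
    obtain ⟨y, hyR, hxy, hyx'⟩ := x'.2.2.2 x hxx'
    exact (csInf_le' (show y ∈ R ∩ Ici x.1 from ⟨hyR, hxy.le⟩)).trans_lt
      (hyx'.trans_le (csInf_mem (hne x' x'.2)).2)
  exact mk_le_of_injective fun x x' h => hf.injective (congrArg Subtype.val h)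

theorem exists_isClubIn_mk_le_cof (hγ : ℵ₀ < γ.cof) :
    ∃ C, IsClubIn C γ ∧ #C ≤ lift.{u + 1} γ.cof := by
  have hγlim : IsSuccLimit γ := one_lt_cof_iff.1 (one_lt_aleph0.trans hγ)
  obtain ⟨s, hs, hscard⟩ := Order.exists_cof_eq (Iio γ)
  have hR : ∀ x < γ, ∃ y ∈ Subtype.val '' s, x < y ∧ y < γ := fun x hx => by
    obtain ⟨y, hys, hxy⟩ := hs (⟨x + 1, hγlim.add_one_lt hx⟩ : Iio γ)
    exact ⟨y, mem_image_of_mem _ hys, (lt_add_one x).trans_le hxy, y.2⟩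
  refine ⟨_, isClubIn_limitPointsBelow hγ hR, ?_⟩
  calc #(limitPointsBelow _ γ) ≤ #(Subtype.val '' s) := mk_limitPointsBelow_le hR
    _ ≤ #s := mk_image_le
    _ = lift.{u + 1} γ.cof := by rw [hscard, cof_Iio, lift_cof]

end SmallClub

theorem lift_mk_le_cof_of_pairwise_disjoint {γ : Ordinal.{u}} (hγ : ℵ₀ < γ.cof) {ι : Type v}
    {T : ι → Set Ordinal.{u}} (hdisj : Pairwise (Disjoint on T)) (hT : ∀ i, IsStatIn (T i) γ) :
    lift.{u} #ι ≤ lift.{v} γ.cof := by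
  obtain ⟨C, hC, hCcard⟩ := exists_isClubIn_mk_le_cof hγ
  choose t htT htC using fun i => hT i C hC
  have ht : Injective t := fun i j hij => by
    by_contra hne
    exact (hdisj hne).ne_of_mem (htT i) (hij ▸ htT j) rfl
  have hιC : lift.{u + 1} #ι ≤ lift.{v} #C :=
    lift_mk_le'.2 ⟨⟨fun i => ⟨t i, htC i⟩, fun i j h => ht (congrArg Subtype.val h)⟩⟩
  have := hιC.trans (Cardinal.lift_le.2 hCcard)
  rw [← Cardinal.lift_le.{u + 1}]
  simpa using this

theorem exists_isStatIn_setOf_not_isStatIn_inter_Iio {κ : Ordinal.{u}} {ι : Type v}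
    {T : ι → Set Ordinal.{u}} (hι : lift.{v} (ℵ₁ : Cardinal.{u}) < lift.{u} #ι)
    (hικ : lift.{u} #ι < lift.{v} κ.cof) (hdisj : Pairwise (Disjoint on T)) :
    ∃ i, IsStatIn {γ | γ < κ ∧ γ.cof = ℵ₁ ∧ ¬ IsStatIn (T i ∩ Iio γ) γ} κ := by
  have hκ : ℵ₁ < κ.cof := Cardinal.lift_lt.1 (hι.trans hικ)
  have hA : IsStatIn {γ | γ < κ ∧ γ.cof = ℵ₁} κ := by
    simpa using isStatIn_setOf_cof_eq (isSuccLimit_omega 1) (by rwa [card_omega])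
  refine (isStatIn_iUnion_iff (aleph0_lt_aleph_one.trans hκ).ne' hικ).1 (hA.mono ?_)
  rintro γ ⟨hγκ, hγ⟩
  suffices ∃ i, ¬ IsStatIn (T i ∩ Iio γ) γ from
    let ⟨i, hi⟩ := this
    mem_iUnion.2 ⟨i, hγκ, hγ, hi⟩
  by_contra! hrefl
  have hdisj' : Pairwise (Disjoint on fun i => T i ∩ Iio γ) := fun i j hij =>
    (hdisj hij).mono inter_subset_left inter_subset_left
  have := lift_mk_le_cof_of_pairwise_disjoint (hγ ▸ aleph0_lt_aleph_one) hdisj' hrefl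
  rw [hγ] at this
  exact this.not_gt hι

section Transport

/-- `T`, `S` and `A` in the theorem live in independent universes; sets of ordinals are moved
between universes along `Ordinal.lift`. -/
def transport (S : Set Ordinal.{u}) : Set Ordinal.{v} :=
  {a | ∃ b ∈ S, Ordinal.lift.{v} b = Ordinal.lift.{u} a}

variable {a b : Ordinal.{u}} {a' b' : Ordinal.{v}}

theorem lt_iff_lt_of_lift_eq (ha : Ordinal.lift.{v} a = Ordinal.lift.{u} a')
    (hb : Ordinal.lift.{v} b = Ordinal.lift.{u} b') : a < b ↔ a' < b' := by
  rw [← Ordinal.lift_lt.{v}, ha, hb, Ordinal.lift_lt]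

theorem exists_lift_eq_of_lt (h : Ordinal.lift.{v} b = Ordinal.lift.{u} b') (ha : a < b) :
    ∃ a' < b', Ordinal.lift.{v} a = Ordinal.lift.{u} a' := by
  obtain ⟨a', ha'⟩ := mem_range_lift_of_le (h ▸ Ordinal.lift_le.2 ha.le)
  exact ⟨a', (lt_iff_lt_of_lift_eq ha'.symm h).1 ha, ha'.symm⟩

variable {C S : Set Ordinal.{u}} {κ : Ordinal.{u}} {κ' : Ordinal.{v}}

theorem IsClubIn.transport (h : Ordinal.lift.{v} κ = Ordinal.lift.{u} κ') (hC : IsClubIn C κ) :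
    IsClubIn (transport.{u, v} C) κ' := by
  refine ⟨?_, fun β' hβ' => ?_, fun α' hα' hα'0 H => ?_⟩
  · rintro a' ⟨a, haC, ha⟩
    exact (lt_iff_lt_of_lift_eq ha h).1 (hC.1 haC)
  · obtain ⟨β, hβκ, hβ⟩ := exists_lift_eq_of_lt h.symm hβ'
    obtain ⟨c, hcC, hβc⟩ := hC.2.1 β hβκ
    obtain ⟨c', -, hc⟩ := exists_lift_eq_of_lt h (hC.1 hcC)
    exact ⟨c', ⟨c, hcC, hc⟩,
      not_lt.1 fun hcβ => hβc.not_gt ((lt_iff_lt_of_lift_eq hc hβ.symm).2 hcβ)⟩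
  · obtain ⟨α, hακ, hα⟩ := exists_lift_eq_of_lt h.symm hα'
    refine ⟨α, hC.2.2 α hακ ?_ fun δ hδ => ?_, hα.symm⟩
    · exact (lt_iff_lt_of_lift_eq (by simp) hα.symm).2 hα'0
    · obtain ⟨δ', hδ'α', hδ⟩ := exists_lift_eq_of_lt hα.symm hδ
      obtain ⟨c', ⟨c, hcC, hc⟩, hδc, hcα⟩ := H δ' hδ'α'
      exact ⟨c, hcC, (lt_iff_lt_of_lift_eq hδ hc).2 hδc, (lt_iff_lt_of_lift_eq hc hα.symm).2 hcα⟩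

theorem isStatIn_transport_iff (h : Ordinal.lift.{v} κ = Ordinal.lift.{u} κ') :
    IsStatIn (transport.{u, v} S) κ' ↔ IsStatIn S κ := by
  refine ⟨fun hS C hC => ?_, fun hS D hD => ?_⟩
  · obtain ⟨x, ⟨b, hbS, hb⟩, c, hcC, hc⟩ := hS _ (hC.transport h)
    exact ⟨b, hbS, Ordinal.lift_inj.1 (hc.trans hb.symm) ▸ hcC⟩
  · obtain ⟨x, hxS, c, hcD, hc⟩ := hS _ (hD.transport h.symm)
    exact ⟨c, ⟨x, hxS, hc.symm⟩, hcD⟩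

theorem transport_inter_Iio (h : Ordinal.lift.{v} κ = Ordinal.lift.{u} κ') :
    transport.{u, v} (S ∩ Iio κ) = transport S ∩ Iio κ' := by
  ext a'
  constructor
  · rintro ⟨a, ⟨haS, haκ⟩, ha⟩
    exact ⟨⟨a, haS, ha⟩, (lt_iff_lt_of_lift_eq ha h).1 haκ⟩
  · rintro ⟨⟨a, haS, ha⟩, haκ'⟩
    exact ⟨a, ⟨haS, (lt_iff_lt_of_lift_eq ha h).2 haκ'⟩, ha⟩

theorem transport_subset_setOf_cof_eq (h : Ordinal.lift.{v} κ = Ordinal.lift.{u} κ')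
    {c : Cardinal.{u}} {c' : Cardinal.{v}} (hc : Cardinal.lift.{v} c = Cardinal.lift.{u} c')
    (hS : S ⊆ {α | α < κ ∧ α.cof = c}) : transport.{u, v} S ⊆ {α | α < κ' ∧ α.cof = c'} := by
  rintro a' ⟨a, haS, ha⟩
  refine ⟨(lt_iff_lt_of_lift_eq ha h).1 (hS haS).1, Cardinal.lift_inj.{v, u}.1 ?_⟩
  rw [lift_cof, ← ha, ← lift_cof, (hS haS).2, hc]

end Transport

/-- Assuming `ω₂`-many pairwise disjoint stationary subsets of
`S³₀ = {α < ω₃ : cf α = ω}` exist, there are a stationary `S ⊆ S³₀` and a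
stationary `A ⊆ S³₁ = {α < ω₃ : cf α = ω₁}` such that `S ∩ γ` is not
stationary in `γ` for any `γ ∈ A`. -/
theorem stmt1
    (T : Ordinal → Set Ordinal)
    (hT : ∀ i < (Cardinal.aleph 2).ord,
      T i ⊆ {α | α < (Cardinal.aleph 3).ord ∧ Ordinal.cof α = Cardinal.aleph0} ∧
      IsStatIn (T i) (Cardinal.aleph 3).ord)
    (hdisj : ∀ i < (Cardinal.aleph 2).ord, ∀ j < (Cardinal.aleph 2).ord,
      i ≠ j → T i ∩ T j = ∅) :
    ∃ S A : Set Ordinal,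
      S ⊆ {α | α < (Cardinal.aleph 3).ord ∧ Ordinal.cof α = Cardinal.aleph0} ∧
      IsStatIn S (Cardinal.aleph 3).ord ∧
      A ⊆ {α | α < (Cardinal.aleph 3).ord ∧ Ordinal.cof α = Cardinal.aleph 1} ∧
      IsStatIn A (Cardinal.aleph 3).ord ∧
      ∀ γ ∈ A, ¬ IsStatIn (S ∩ Set.Iio γ) γ := by
  obtain ⟨⟨i, hi⟩, hA⟩ := exists_isStatIn_setOf_not_isStatIn_inter_Iio
    (κ := (ℵ_ 3).ord) (T := fun i : Iio (ℵ_ 2).ord => T i) (by simp)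
    (by simp [show (3 : Ordinal) = 2 + 1 by norm_num])
    fun i j hij => disjoint_iff_inter_eq_empty.2 (hdisj i i.2 j j.2 (Subtype.coe_ne_coe.2 hij))
  refine ⟨transport (T i), transport _,
    transport_subset_setOf_cof_eq (by simp) (by simp) (hT i hi).1,
    (isStatIn_transport_iff (by simp)).2 (hT i hi).2,
    transport_subset_setOf_cof_eq (by simp) (by simp) fun γ hγ => ⟨hγ.1, hγ.2.1⟩,
    (isStatIn_transport_iff (by simp)).2 hA, ?_⟩
  rintro γ' ⟨γ, hγ, hγγ'⟩
  rw [← transport_inter_Iio hγγ', isStatIn_transport_iff hγγ']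
  exact hγ.2.2
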